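/- arXiv:1310.3689 — 3 statements merged into one kernel-verified Lean document; each statement's English description precedes it below -/
import Mathlib

section
/- For every function u in the weighted Sobolev space H^1_c(ℝ) = H^1(ℝ, e^{cz}dz) with c > 0, the Poincaré-type inequality (c²/4) ∫_ℝ e^{cz} u(z)² dz ≤ ∫_ℝ e^{cz} u'(z)² dz holds. -/
/-!
Integrating the exact derivative `(e^{cz} u²)' = e^{cz} (c u² + 2 u u')` over `ℝ` gives zero, since
`e^{cz} u²` and its derivative are integrable. Hence `∫ e^{cz} u u' = -(c/2) ∫ e^{cz} u²`, and expanding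
`0 ≤ ∫ e^{cz} (c/2 · u + u')²` yields the inequality.
-/

open MeasureTheory Real

lemma MeasureTheory.Integrable.weighted_mul_of_sq {α : Type*} [MeasurableSpace α] {μ : Measure α}
    {w f g : α → ℝ} (hw : ∀ x, 0 ≤ w x)
    (hf : Integrable (fun x => w x * f x ^ 2) μ) (hg : Integrable (fun x => w x * g x ^ 2) μ)
    (hmeas : AEStronglyMeasurable (fun x => w x * (f x * g x)) μ) :
    Integrable (fun x => w x * (f x * g x)) μ := by
  refine ((hf.add hg).div_const 2).mono' hmeas (ae_of_all _ fun x => ?_)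
  have hfg : |f x * g x| ≤ (f x ^ 2 + g x ^ 2) / 2 := by
    rw [abs_mul]
    nlinarith [sq_nonneg (|f x| - |g x|), sq_abs (f x), sq_abs (g x)]
  calc ‖w x * (f x * g x)‖ = w x * |f x * g x| := by
        rw [Real.norm_eq_abs, abs_mul, abs_of_nonneg (hw x)]
    _ ≤ w x * ((f x ^ 2 + g x ^ 2) / 2) := mul_le_mul_of_nonneg_left hfg (hw x)
    _ = (w x * f x ^ 2 + w x * g x ^ 2) / 2 := by ring

lemma hasDerivAt_exp_mul_sq {c : ℝ} {u : ℝ → ℝ} {u' z : ℝ} (hu : HasDerivAt u u' z) :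
    HasDerivAt (fun z => exp (c * z) * u z ^ 2)
      (exp (c * z) * (c * u z ^ 2 + 2 * (u z * u'))) z := by
  have hexp : HasDerivAt (fun z => exp (c * z)) (exp (c * z) * c) z := by
    simpa using ((hasDerivAt_id z).const_mul c).exp
  exact (hexp.fun_mul (hu.fun_pow 2)).congr_deriv (by norm_num; ring)

lemma integrable_exp_mul_sq_deriv {c : ℝ} {u u' : ℝ → ℝ} (hderiv : ∀ z, HasDerivAt u (u' z) z)
    (hu : Integrable (fun z => exp (c * z) * u z ^ 2))
    (hu' : Integrable (fun z => exp (c * z) * u' z ^ 2)) :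
    Integrable (fun z => exp (c * z) * (c * u z ^ 2 + 2 * (u z * u' z))) := by
  have hu_cont : Continuous u := continuous_iff_continuousAt.2 fun z => (hderiv z).continuousAt
  have hu'_eq : u' = deriv u := funext fun z => (hderiv z).deriv.symm
  have hcross : Integrable (fun z => exp (c * z) * (u z * u' z)) := by
    refine hu.weighted_mul_of_sq (fun z => (exp_pos _).le) hu' ?_
    rw [hu'_eq]
    exact (by fun_prop : Continuous fun z => exp (c * z)).aestronglyMeasurable.mul
      (hu_cont.aestronglyMeasurable.mul (measurable_deriv u).aestronglyMeasurable)
  refine ((hu.const_mul c).add (hcross.const_mul 2)).congr (ae_of_all _ fun z => ?_)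
  simp only [Pi.add_apply]
  ring

lemma integral_exp_mul_sq_deriv {c : ℝ} {u u' : ℝ → ℝ} (hderiv : ∀ z, HasDerivAt u (u' z) z)
    (hu : Integrable (fun z => exp (c * z) * u z ^ 2))
    (hu' : Integrable (fun z => exp (c * z) * u' z ^ 2)) :
    ∫ z, exp (c * z) * (c * u z ^ 2 + 2 * (u z * u' z)) = 0 :=
  integral_eq_zero_of_hasDerivAt_of_integrable (fun z => hasDerivAt_exp_mul_sq (hderiv z))
    (integrable_exp_mul_sq_deriv hderiv hu hu') hu

theorem poincare_weighted_general (c : ℝ) (u u' : ℝ → ℝ)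
    (hderiv : ∀ z, HasDerivAt u (u' z) z)
    (hu : Integrable (fun z => exp (c * z) * (u z) ^ 2))
    (hu' : Integrable (fun z => exp (c * z) * (u' z) ^ 2)) :
    c ^ 2 / 4 * ∫ z, exp (c * z) * (u z) ^ 2 ≤ ∫ z, exp (c * z) * (u' z) ^ 2 := by
  have hexact := integrable_exp_mul_sq_deriv hderiv hu hu'
  have hsquare : ∫ z, exp (c * z) * (c / 2 * u z + u' z) ^ 2 =
      c / 2 * (∫ z, exp (c * z) * (c * u z ^ 2 + 2 * (u z * u' z)))
        + (∫ z, exp (c * z) * u' z ^ 2) - c ^ 2 / 4 * ∫ z, exp (c * z) * u z ^ 2 := by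
    have hpointwise : (fun z => exp (c * z) * (c / 2 * u z + u' z) ^ 2) = fun z =>
        (c / 2 * (exp (c * z) * (c * u z ^ 2 + 2 * (u z * u' z))) + exp (c * z) * u' z ^ 2)
          - c ^ 2 / 4 * (exp (c * z) * u z ^ 2) := by
      funext z
      ring
    rw [hpointwise, integral_sub ((hexact.const_mul _).fun_add hu') (hu.const_mul _),
      integral_add (hexact.const_mul _) hu', integral_const_mul, integral_const_mul]
  have hnonneg : 0 ≤ ∫ z, exp (c * z) * (c / 2 * u z + u' z) ^ 2 :=
    integral_nonneg fun z => mul_nonneg (exp_pos _).le (sq_nonneg _)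
  rw [hsquare, integral_exp_mul_sq_deriv hderiv hu hu'] at hnonneg
  linarith

/-- Poincaré-type inequality in the weighted space `H^1_c(ℝ) = H^1(ℝ, e^{cz}dz)`:
for `c > 0`, `(c²/4) ∫ e^{cz} u² ≤ ∫ e^{cz} u'²`. -/
theorem poincare_weighted (c : ℝ) (hc : 0 < c) (u u' : ℝ → ℝ)
    (hderiv : ∀ z, HasDerivAt u (u' z) z)
    (hu : Integrable (fun z => exp (c * z) * (u z) ^ 2))
    (hu' : Integrable (fun z => exp (c * z) * (u' z) ^ 2)) :
    c ^ 2 / 4 * ∫ z, exp (c * z) * (u z) ^ 2 ≤ ∫ z, exp (c * z) * (u' z) ^ 2 :=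
  poincare_weighted_general c u u' hderiv hu hu'
end

section
/- Under the assumptions of the previous energy bound, any minimizing sequence of E_c over H^1_c(ℝ) consisting of functions with values in [0,M] is eventually bounded in the H^1_c(ℝ) norm: there exist N ∈ ℕ and C₁ > 0 such that for all n > N, ‖u_n‖²_{H^1_c} ≤ (1+C₁)/min{1/2, δ/2}. -/
open MeasureTheory Real

/-!
On `|z| > R` the nonlinearity is absorbing, `F(z,s) ≤ -δ s²/2`, so there the energy density
`e^{cz}(u'²/2 - F(z,u))` dominates `min{1/2, δ/2} e^{cz}(u'² + u²)`. On `[-R, R]` the same holds up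
to the error `(C₀ + δM²/2) e^{cz}`, with `C₀ = L M²/2` bounding `F` on `[0, M]`. Integrating,
`min{1/2, δ/2} ‖u‖²_{H^1_c} ≤ E_c[u] + C₁` with `C₁ = (C₀ + δM²/2) ∫_{-R}^{R} e^{cz} dz`. The zero
function has energy `0`, so the infimum is `≤ 0` and eventually `E_c[u_n] < 1`.
-/

/-- Membership in the weighted Sobolev space `H^1_c(ℝ)`, given a global derivative `u'`. -/
def MemH1c (c : ℝ) (u u' : ℝ → ℝ) : Prop :=
  (∀ z, HasDerivAt u (u' z) z) ∧
  Integrable (fun z => exp (c * z) * (u z) ^ 2) ∧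
  Integrable (fun z => exp (c * z) * (u' z) ^ 2)

/-- The energy functional `E_c[u] = ∫ e^{cz}(u'²/2 − F(z,u))`, `F(z,s) = ∫₀^s f(z,t)dt`. -/
noncomputable def Ener (c : ℝ) (f : ℝ → ℝ → ℝ) (u u' : ℝ → ℝ) : ℝ :=
  ∫ z, exp (c * z) * ((u' z) ^ 2 / 2 - ∫ t in (0:ℝ)..(u z), f z t)

/-- Integrability of the energy integrand. -/
def EnerInt (c : ℝ) (f : ℝ → ℝ → ℝ) (u u' : ℝ → ℝ) : Prop :=
  Integrable (fun z => exp (c * z) * ((u' z) ^ 2 / 2 - ∫ t in (0:ℝ)..(u z), f z t))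

open Set

lemma integral_le_half_mul_sq {g : ℝ → ℝ} {k s : ℝ} (hs : 0 ≤ s)
    (hg : IntervalIntegrable g volume 0 s) (h : ∀ t ∈ Ioo 0 s, g t ≤ k * t) :
    ∫ t in (0:ℝ)..s, g t ≤ k * s ^ 2 / 2 :=
  calc ∫ t in (0:ℝ)..s, g t ≤ ∫ t in (0:ℝ)..s, k * t :=
        intervalIntegral.integral_mono_on_of_le_Ioo hs hg
          ((continuous_const.mul continuous_id).intervalIntegrable _ _) h
    _ = k * s ^ 2 / 2 := by rw [intervalIntegral.integral_const_mul, integral_id]; ring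

lemma LipschitzWith.integral_le_half_mul_sq {g : ℝ → ℝ} {L : NNReal} (hg : LipschitzWith L g)
    (hg0 : g 0 = 0) {s : ℝ} (hs : 0 ≤ s) :
    ∫ t in (0:ℝ)..s, g t ≤ L * s ^ 2 / 2 := by
  refine _root_.integral_le_half_mul_sq hs (hg.continuous.intervalIntegrable _ _) fun t ht => ?_
  have h := hg.dist_le_mul t 0
  rw [dist_zero_right, Real.dist_eq, hg0, sub_zero, Real.norm_eq_abs, abs_of_pos ht.1] at h
  exact (le_abs_self _).trans h

section EnergyDensity

variable {f : ℝ → ℝ → ℝ} {L : NNReal} {M δ R : ℝ}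

lemma energy_density_lower_bound (hδ : 0 ≤ δ) (hf0 : ∀ z, f z 0 = 0)
    (hL : ∀ z, LipschitzWith L (f z))
    (hfav : ∀ z s, R < |z| → 0 < s → s < M → f z s ≤ -δ * s)
    (z a : ℝ) {b : ℝ} (hb0 : 0 ≤ b) (hbM : b ≤ M) :
    min (1/2) (δ/2) * (a ^ 2 + b ^ 2)
        - (Icc (-R) R).indicator (fun _ => L * M ^ 2 / 2 + δ * M ^ 2 / 2) z
      ≤ a ^ 2 / 2 - ∫ t in (0:ℝ)..b, f z t := by
  have ha : min (1/2) (δ/2) * a ^ 2 ≤ a ^ 2 / 2 := by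
    nlinarith [min_le_left (1/2 : ℝ) (δ/2), sq_nonneg a]
  have hb : min (1/2) (δ/2) * b ^ 2 ≤ δ / 2 * b ^ 2 := by
    nlinarith [min_le_right (1/2 : ℝ) (δ/2), sq_nonneg b]
  by_cases hz : z ∈ Icc (-R) R
  · rw [indicator_of_mem hz]
    have hF := (hL z).integral_le_half_mul_sq (hf0 z) hb0
    have hLM : (L : ℝ) * b ^ 2 ≤ L * M ^ 2 := by gcongr
    have hδM : δ / 2 * b ^ 2 ≤ δ / 2 * M ^ 2 := by gcongr
    linarith
  · rw [indicator_of_notMem hz, sub_zero]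
    have hzR : R < |z| := lt_of_not_ge fun h => hz (abs_le.1 h)
    have hF : ∫ t in (0:ℝ)..b, f z t ≤ -δ * b ^ 2 / 2 :=
      integral_le_half_mul_sq hb0 ((hL z).continuous.intervalIntegrable _ _)
        fun t ht => hfav z t hzR ht.1 (ht.2.trans_le hbM)
    linarith

theorem min_mul_normSq_sub_le_Ener {c : ℝ} (hδ : 0 ≤ δ) (hf0 : ∀ z, f z 0 = 0)
    (hL : ∀ z, LipschitzWith L (f z))
    (hfav : ∀ z s, R < |z| → 0 < s → s < M → f z s ≤ -δ * s)
    {u u' : ℝ → ℝ} (hmem : MemH1c c u u') (hint : EnerInt c f u u')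
    (hrange : ∀ z, 0 ≤ u z ∧ u z ≤ M) :
    min (1/2) (δ/2) * (∫ z, exp (c * z) * ((u' z) ^ 2 + (u z) ^ 2))
        - (L * M ^ 2 / 2 + δ * M ^ 2 / 2) * ∫ z in Icc (-R) R, exp (c * z)
      ≤ Ener c f u u' := by
  set m := min (1/2 : ℝ) (δ/2)
  set K := (L : ℝ) * M ^ 2 / 2 + δ * M ^ 2 / 2
  have hnorm : Integrable (fun z => exp (c * z) * ((u' z) ^ 2 + (u z) ^ 2)) := by
    simpa only [mul_add, Pi.add_def] using hmem.2.2.add hmem.2.1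
  have hexp : IntegrableOn (fun z => K * exp (c * z)) (Icc (-R) R) :=
    (by fun_prop : Continuous fun z => K * exp (c * z)).integrableOn_Icc
  have hcut : Integrable ((Icc (-R) R).indicator fun z => K * exp (c * z)) :=
    (integrable_indicator_iff measurableSet_Icc).2 hexp
  have hpointwise : ∀ z, m * (exp (c * z) * ((u' z) ^ 2 + (u z) ^ 2))
      - (Icc (-R) R).indicator (fun z => K * exp (c * z)) z
      ≤ exp (c * z) * ((u' z) ^ 2 / 2 - ∫ t in (0:ℝ)..(u z), f z t) := by
    intro z
    have h := mul_le_mul_of_nonneg_left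
      (energy_density_lower_bound (R := R) hδ hf0 hL hfav z (u' z) (hrange z).1 (hrange z).2)
      (exp_pos (c * z)).le
    have hind : (Icc (-R) R).indicator (fun z => K * exp (c * z)) z
        = exp (c * z) * (Icc (-R) R).indicator (fun _ => K) z := by
      by_cases hz : z ∈ Icc (-R) R <;> simp [hz, mul_comm]
    rw [hind]
    linarith
  calc m * (∫ z, exp (c * z) * ((u' z) ^ 2 + (u z) ^ 2)) - K * ∫ z in Icc (-R) R, exp (c * z)
      = ∫ z, (m * (exp (c * z) * ((u' z) ^ 2 + (u z) ^ 2))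
          - (Icc (-R) R).indicator (fun z => K * exp (c * z)) z) := by
        rw [integral_sub (hnorm.const_mul m) hcut, integral_const_mul,
          integral_indicator measurableSet_Icc, integral_const_mul]
    _ ≤ Ener c f u u' := integral_mono ((hnorm.const_mul m).sub hcut) hint hpointwise

end EnergyDensity

lemma sInf_Ener_le_zero (c : ℝ) (f : ℝ → ℝ → ℝ) :
    sInf {e : ℝ | ∃ v v' : ℝ → ℝ, MemH1c c v v' ∧ EnerInt c f v v' ∧ e = Ener c f v v'} ≤ 0 := by
  set S := {e : ℝ | ∃ v v' : ℝ → ℝ, MemH1c c v v' ∧ EnerInt c f v v' ∧ e = Ener c f v v'}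
  have h0 : (0 : ℝ) ∈ S :=
    ⟨0, 0, ⟨fun z => hasDerivAt_const z 0, by simp, by simp⟩, by simp [EnerInt], by simp [Ener]⟩
  by_cases hS : BddBelow S
  · exact csInf_le hS h0
  · exact (Real.sInf_of_not_bddBelow hS).le

theorem minimizing_sequence_bounded_general (c M δ R : ℝ) (hM : 0 < M)
    (hδ : 0 < δ) (hR : 0 < R) (f : ℝ → ℝ → ℝ)
    (hf0 : ∀ z, f z 0 = 0)
    (hflip : ∃ L : NNReal, ∀ z, LipschitzWith L (f z))
    (hfav : ∀ z s, R < |z| → 0 < s → s < M → f z s ≤ -δ * s)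
    (u : ℕ → ℝ → ℝ) (u' : ℕ → ℝ → ℝ)
    (hmem : ∀ n, MemH1c c (u n) (u' n))
    (hint : ∀ n, EnerInt c f (u n) (u' n))
    (hrange : ∀ n z, 0 ≤ u n z ∧ u n z ≤ M)
    (hmin : Filter.Tendsto (fun n => Ener c f (u n) (u' n)) Filter.atTop
      (nhds (sInf {e : ℝ | ∃ v v' : ℝ → ℝ, MemH1c c v v' ∧ EnerInt c f v v' ∧
        e = Ener c f v v'}))) :
    ∃ N : ℕ, ∃ C₁ : ℝ, 0 < C₁ ∧ ∀ n > N,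
      (∫ z, exp (c * z) * ((u' n z) ^ 2 + (u n z) ^ 2))
        ≤ (1 + C₁) / min (1/2) (δ/2) := by
  obtain ⟨L, hL⟩ := hflip
  obtain ⟨N, hN⟩ := Filter.eventually_atTop.1 <|
    hmin.eventually_lt_const (lt_of_le_of_lt (sInf_Ener_le_zero c f) one_pos)
  have hweight : 0 < ∫ z in Icc (-R) R, exp (c * z) := by
    rw [integral_Icc_eq_integral_Ioc, ← intervalIntegral.integral_of_le (by linarith)]
    exact intervalIntegral.intervalIntegral_pos_of_pos
      ((by fun_prop : Continuous _).intervalIntegrable _ _) (fun z => exp_pos _) (by linarith)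
  refine ⟨N, (L * M ^ 2 / 2 + δ * M ^ 2 / 2) * ∫ z in Icc (-R) R, exp (c * z), by positivity,
    fun n hn => ?_⟩
  rw [le_div_iff₀ (lt_min (by norm_num) (by positivity)), mul_comm]
  linarith [hN n hn.le,
    min_mul_normSq_sub_le_Ener (R := R) hδ.le hf0 hL hfav (hmem n) (hint n) (hrange n)]

/-- Any minimizing sequence of `E_c` consisting of functions with values in `[0,M]`
is eventually bounded in the `H^1_c` norm by `(1+C₁)/min{1/2, δ/2}`. -/
theorem minimizing_sequence_bounded (c M δ R : ℝ) (hc : 0 < c) (hM : 0 < M)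
    (hδ : 0 < δ) (hR : 0 < R) (f : ℝ → ℝ → ℝ)
    (hf0 : ∀ z, f z 0 = 0)
    (hflip : ∃ L : NNReal, ∀ z, LipschitzWith L (f z))
    (hfneg : ∀ z s, s ≤ 0 ∨ M ≤ s → f z s ≤ 0)
    (hfav : ∀ z s, R < |z| → 0 < s → s < M → f z s ≤ -δ * s)
    (u : ℕ → ℝ → ℝ) (u' : ℕ → ℝ → ℝ)
    (hmem : ∀ n, MemH1c c (u n) (u' n))
    (hint : ∀ n, EnerInt c f (u n) (u' n))
    (hrange : ∀ n z, 0 ≤ u n z ∧ u n z ≤ M)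
    (hmin : Filter.Tendsto (fun n => Ener c f (u n) (u' n)) Filter.atTop
      (nhds (sInf {e : ℝ | ∃ v v' : ℝ → ℝ, MemH1c c v v' ∧ EnerInt c f v v' ∧
        e = Ener c f v v'}))) :
    ∃ N : ℕ, ∃ C₁ : ℝ, 0 < C₁ ∧ ∀ n > N,
      (∫ z, exp (c * z) * ((u' n z) ^ 2 + (u n z) ^ 2))
        ≤ (1 + C₁) / min (1/2) (δ/2) :=
  minimizing_sequence_bounded_general c M δ R hM hδ hR f hf0 hflip hfav u u' hmem hint hrange hmin
end

section
/- Let c > 0, δ > 0, R > 0. Suppose w ∈ H^2(ℝ) ∩ C(ℝ) is nonnegative, bounded, satisfies −w'' − cw' ≤ −δw on (−∞,−R) ∪ (R,∞), and w(z) → 0 as z → ±∞. Let λ₋ < 0 < λ₊ be the two roots of λ² + cλ = δ. Then w(z) ≤ w(−R) e^{λ₊(z+R)} for all z ≤ −R, and w(z) ≤ w(R) e^{λ₋(z−R)} for all z ≥ R. -/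
/-! With `λ₋ + λ₊ = -c` and `λ₋ λ₊ = -δ`, the inequality `-w'' - c w' ≤ -δ w` reads
`u' ≥ λ₊ u` for `u = w' - λ₋ w`. If `u` were positive somewhere beyond `R`, it would grow like
`e^{λ₊ z}`, and then so would `w`, contradicting boundedness. Hence `w' ≤ λ₋ w` on `[R, ∞)`, so
`e^{-λ₋ z} w` is nonincreasing there. The reflection `z ↦ -z` turns `c` into `-c` and the roots
into `-λ₊ < 0 < -λ₋`, which reduces the half-line `(-∞, -R]` to the first one. -/

open Real Filter Set

section ExpComparison

variable {f f' : ℝ → ℝ} {k a : ℝ}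

theorem le_mul_exp_of_deriv_le_mul (hf : ∀ x ∈ Ici a, HasDerivAt f (f' x) x)
    (hle : ∀ x ∈ Ioi a, f' x ≤ k * f x) {x : ℝ} (hx : a ≤ x) :
    f x ≤ f a * exp (k * (x - a)) := by
  set g : ℝ → ℝ := fun x => f x * exp (k * (a - x)) with hg_def
  have hg : ∀ x ∈ Ici a, HasDerivAt g ((f' x - k * f x) * exp (k * (a - x))) x := fun x hx =>
    ((hf x hx).mul (((hasDerivAt_id' x).const_sub a).const_mul k).exp).congr_deriv (by ring)
  have hanti : AntitoneOn g (Ici a) := by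
    refine antitoneOn_of_deriv_nonpos (convex_Ici a)
      (fun x hx => (hg x hx).continuousAt.continuousWithinAt) ?_ ?_ <;> rw [interior_Ici]
    · exact fun x hx => (hg x (Ioi_subset_Ici_self hx)).differentiableAt.differentiableWithinAt
    · intro x hx
      rw [(hg x (Ioi_subset_Ici_self hx)).deriv]
      exact mul_nonpos_of_nonpos_of_nonneg (sub_nonpos.2 (hle x hx)) (exp_pos _).le
  have hga : g x ≤ f a := by simpa [g] using hanti self_mem_Ici hx hx
  calc f x = g x * exp (k * (x - a)) := by
        rw [hg_def, mul_assoc, ← exp_add, ← mul_add, sub_add_sub_cancel', sub_self, mul_zero,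
          exp_zero, mul_one]
    _ ≤ f a * exp (k * (x - a)) := by gcongr

theorem mul_exp_le_of_mul_le_deriv (hf : ∀ x ∈ Ici a, HasDerivAt f (f' x) x)
    (hle : ∀ x ∈ Ioi a, k * f x ≤ f' x) {x : ℝ} (hx : a ≤ x) :
    f a * exp (k * (x - a)) ≤ f x := by
  simpa using le_mul_exp_of_deriv_le_mul (f := -f) (f' := -f') (fun x hx => (hf x hx).neg)
    (fun x hx => by simpa using hle x hx) hx

end ExpComparison

section ODEInequality

variable {w w' w'' : ℝ → ℝ} {c δ a lm lp : ℝ}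

theorem deriv_le_mul_self_of_bddAbove (hw : ∀ x ∈ Ici a, HasDerivAt w (w' x) x)
    (hw' : ∀ x ∈ Ici a, HasDerivAt w' (w'' x) x) (hbdd : BddAbove (w '' Ici a))
    (hlm : lm ≤ 0) (hlp : 0 < lp)
    (hineq : ∀ x ∈ Ioi a, lp * (w' x - lm * w x) ≤ w'' x - lm * w' x) :
    ∀ x ∈ Ici a, w' x ≤ lm * w x := by
  by_contra! ⟨x₀, hx₀, hpos⟩
  obtain ⟨B, hB⟩ := hbdd
  set b := w' x₀ - lm * w x₀
  have hb : 0 < b := sub_pos.2 hpos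
  have hsub : Ici x₀ ⊆ Ici a := Ici_subset_Ici.2 hx₀
  have hgrow : ∀ x ∈ Ici x₀, b * exp (lp * (x - x₀)) ≤ w' x - lm * w x := fun x hx =>
    mul_exp_le_of_mul_le_deriv (fun y hy => (hw' y (hsub hy)).sub ((hw y (hsub hy)).const_mul lm))
      (fun y hy => hineq y (Ioi_subset_Ioi hx₀ hy)) hx
  -- `C` is chosen so that `v' - lm v = (w' - lm w) - b e^{lp (x - x₀)}`, which `hgrow` bounds
  -- below by `0`.
  set C := b / (lp - lm)
  set v : ℝ → ℝ := fun x => w x - C * exp (lp * (x - x₀))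
  have hv : ∀ x ∈ Ici x₀, v x₀ * exp (lm * (x - x₀)) ≤ v x := fun x hx => by
    refine mul_exp_le_of_mul_le_deriv (f' := fun x => w' x - C * (lp * exp (lp * (x - x₀))))
      (fun y hy => ?_) (fun y hy => ?_) hx
    · exact ((hw y (hsub hy)).sub
        ((((hasDerivAt_id' y).sub_const x₀).const_mul lp).exp.const_mul C)).congr_deriv (by ring)
    · have hC : C * (lp - lm) = b := div_mul_cancel₀ _ (by linarith)
      have := hgrow y (Ioi_subset_Ici_self hy)
      rw [← hC] at this
      simp only [v]
      linarith
  have hwlow : ∀ x ∈ Ici x₀, -|v x₀| + C * exp (lp * (x - x₀)) ≤ w x := fun x hx => by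
    have he : exp (lm * (x - x₀)) ≤ 1 :=
      exp_le_one_iff.2 (mul_nonpos_of_nonpos_of_nonneg hlm (sub_nonneg.2 hx))
    have hvx : w x = v x + C * exp (lp * (x - x₀)) := by simp [v]
    nlinarith [hv x hx, neg_abs_le (v x₀), abs_nonneg (v x₀), exp_pos (lm * (x - x₀))]
  have hT : Tendsto (fun x => -|v x₀| + C * exp (lp * (x - x₀))) atTop atTop :=
    tendsto_atTop_add_const_left _ _ <| Tendsto.const_mul_atTop (div_pos hb (by linarith)) <|
      tendsto_exp_atTop.comp <|
        (tendsto_atTop_add_const_right _ (-x₀) tendsto_id).const_mul_atTop hlp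
  obtain ⟨x, hxB, hx⟩ := ((hT.eventually_gt_atTop B).and (eventually_ge_atTop x₀)).exists
  exact (hxB.trans_le (hwlow x hx)).not_ge (hB ⟨x, hsub hx, rfl⟩)

theorem le_mul_exp_of_ode_ineq_Ici (hw : ∀ x ∈ Ici a, HasDerivAt w (w' x) x)
    (hw' : ∀ x ∈ Ici a, HasDerivAt w' (w'' x) x) (hbdd : BddAbove (w '' Ici a))
    (hineq : ∀ x ∈ Ioi a, -(w'' x) - c * w' x ≤ -δ * w x)
    (hlm : lm ≤ 0) (hlp : 0 < lp) (hrootm : lm ^ 2 + c * lm = δ) (hrootp : lp ^ 2 + c * lp = δ)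
    {x : ℝ} (hx : a ≤ x) :
    w x ≤ w a * exp (lm * (x - a)) := by
  have hsum : lm + lp = -c := by
    have hfactor : (lm - lp) * (lm + lp + c) = 0 := by linear_combination hrootm - hrootp
    linarith [(mul_eq_zero.1 hfactor).resolve_left (by linarith)]
  have hprod : lm * lp = -δ := by linear_combination lm * hsum - hrootm
  refine le_mul_exp_of_deriv_le_mul hw (fun y hy => ?_) hx
  refine deriv_le_mul_self_of_bddAbove hw hw' hbdd hlm hlp (fun z hz => ?_) y
    (Ioi_subset_Ici_self hy)
  linear_combination hineq z hz + w' z * hsum - w z * hprod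

theorem le_mul_exp_of_ode_ineq_Iic (hw : ∀ x ∈ Iic a, HasDerivAt w (w' x) x)
    (hw' : ∀ x ∈ Iic a, HasDerivAt w' (w'' x) x) (hbdd : BddAbove (w '' Iic a))
    (hineq : ∀ x ∈ Iio a, -(w'' x) - c * w' x ≤ -δ * w x)
    (hlm : lm < 0) (hlp : 0 ≤ lp) (hrootm : lm ^ 2 + c * lm = δ) (hrootp : lp ^ 2 + c * lp = δ)
    {x : ℝ} (hx : x ≤ a) :
    w x ≤ w a * exp (lp * (x - a)) := by
  have hreflect := le_mul_exp_of_ode_ineq_Ici (c := -c) (lm := -lp) (lp := -lm)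
    (w := fun x => w (-x)) (w' := fun x => -w' (-x)) (w'' := fun x => w'' (-x))
    (fun y hy => by
      simpa [Function.comp_def] using (hw (-y) (mem_Iic.2 (neg_le.1 hy))).comp y (hasDerivAt_neg y))
    (fun y hy => by
      simpa [Function.comp_def, Pi.neg_def] using
        ((hw' (-y) (mem_Iic.2 (neg_le.1 hy))).comp y (hasDerivAt_neg y)).neg)
    (hbdd.mono (by rintro _ ⟨y, hy, rfl⟩; exact ⟨-y, mem_Iic.2 (neg_le.1 hy), rfl⟩))
    (fun y hy => by simpa only [neg_mul_neg] using hineq (-y) (mem_Iio.2 (neg_lt.1 hy)))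
    (by linarith) (by linarith) (by linear_combination hrootp) (by linear_combination hrootm)
    (neg_le_neg hx)
  simpa only [neg_neg, show -lp * (-x - -a) = lp * (x - a) by ring] using hreflect

end ODEInequality

theorem exponential_barrier_general (c δ R : ℝ)
    (w w' w'' : ℝ → ℝ)
    (hd1 : ∀ z, HasDerivAt w (w' z) z)
    (hd2 : ∀ z, HasDerivAt w' (w'' z) z)
    (hbdd : ∃ B : ℝ, ∀ z, w z ≤ B)
    (hineq : ∀ z, R < |z| → -(w'' z) - c * w' z ≤ -δ * w z)
    (lm lp : ℝ) (hlm : lm < 0) (hlp : 0 < lp)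
    (hrootm : lm ^ 2 + c * lm = δ) (hrootp : lp ^ 2 + c * lp = δ) :
    (∀ z, z ≤ -R → w z ≤ w (-R) * exp (lp * (z + R))) ∧
    (∀ z, R ≤ z → w z ≤ w R * exp (lm * (z - R))) := by
  obtain ⟨B, hB⟩ := hbdd
  have hbddAbove (s : Set ℝ) : BddAbove (w '' s) := ⟨B, forall_mem_image.2 fun z _ => hB z⟩
  refine ⟨fun z hz => ?_, fun z hz => ?_⟩
  · simpa only [sub_neg_eq_add] using le_mul_exp_of_ode_ineq_Iic (fun z _ => hd1 z)
      (fun z _ => hd2 z) (hbddAbove _) (fun z hz => hineq z ((lt_neg.1 hz).trans_le (neg_le_abs z)))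
      hlm hlp.le hrootm hrootp hz
  · exact le_mul_exp_of_ode_ineq_Ici (fun z _ => hd1 z) (fun z _ => hd2 z) (hbddAbove _)
      (fun z hz => hineq z (hz.trans_le (le_abs_self z))) hlm.le hlp hrootm hrootp hz

/-- Exponential barrier estimate: a nonnegative bounded function satisfying
`−w'' − cw' ≤ −δw` outside `(−R,R)` and vanishing at `±∞` is dominated by the
explicit exponentials `w(−R)e^{λ₊(z+R)}` for `z ≤ −R` and `w(R)e^{λ₋(z−R)}` for `z ≥ R`,
where `λ₋ < 0 < λ₊` solve `λ² + cλ = δ`. -/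
theorem exponential_barrier (c δ R : ℝ) (hc : 0 < c) (hδ : 0 < δ) (hR : 0 < R)
    (w w' w'' : ℝ → ℝ)
    (hd1 : ∀ z, HasDerivAt w (w' z) z)
    (hd2 : ∀ z, HasDerivAt w' (w'' z) z)
    (hpos : ∀ z, 0 ≤ w z)
    (hbdd : ∃ B : ℝ, ∀ z, w z ≤ B)
    (hineq : ∀ z, R < |z| → -(w'' z) - c * w' z ≤ -δ * w z)
    (hlimtop : Tendsto w atTop (nhds 0))
    (hlimbot : Tendsto w atBot (nhds 0))
    (lm lp : ℝ) (hlm : lm < 0) (hlp : 0 < lp)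
    (hrootm : lm ^ 2 + c * lm = δ) (hrootp : lp ^ 2 + c * lp = δ) :
    (∀ z, z ≤ -R → w z ≤ w (-R) * exp (lp * (z + R))) ∧
    (∀ z, R ≤ z → w z ≤ w R * exp (lm * (z - R))) :=
  exponential_barrier_general c δ R w w' w'' hd1 hd2 hbdd hineq lm lp hlm hlp hrootm hrootp
end
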